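/- If Σ(θ) = Σ₀ + θ·D is an affine function of the scalar parameter θ (with D a fixed symmetric matrix and Σ(θ) positive definite on an interval), then the k-th derivative of M(θ) := Σ(θ)⁻¹ - Σ(θ)⁻¹X(XᵀΣ(θ)⁻¹X)⁻¹XᵀΣ(θ)⁻¹ is given by d^k M / dθ^k = (-1)^k · k! · M·(D·M)^k. -/

import Mathlib

/-!
Differentiating `Σ⁻¹` and `(XᵀΣ⁻¹X)⁻¹` with `(A⁻¹)' = -A⁻¹ A' A⁻¹` and collecting terms gives
`M' = -M Σ' M`, i.e. `M' = -M D M` on the affine path. Feeding this into the product rule gives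
`(M (D M)^k)' = -(k + 1) M (D M)^(k + 1)`, and iterating yields the factor `(-1)^k k!`.
-/

open Matrix

/-- The matrix `M(Σ) = Σ⁻¹ - Σ⁻¹X(XᵀΣ⁻¹X)⁻¹XᵀΣ⁻¹`. -/
noncomputable def Mmat {n m : ℕ} (X : Matrix (Fin n) (Fin m) ℝ)
    (S : Matrix (Fin n) (Fin n) ℝ) : Matrix (Fin n) (Fin n) ℝ :=
  S⁻¹ - S⁻¹ * X * (Xᵀ * S⁻¹ * X)⁻¹ * Xᵀ * S⁻¹

theorem iteratedDerivWithin_eq_of_hasDerivAt {𝕜 F : Type*} [NontriviallyNormedField 𝕜]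
    [NormedAddCommGroup F] [NormedSpace 𝕜 F] {s : Set 𝕜} (hs : IsOpen s) {g : ℕ → 𝕜 → F}
    (hg : ∀ k, ∀ x ∈ s, HasDerivAt (g k) (g (k + 1) x) x) (k : ℕ) :
    ∀ x ∈ s, iteratedDerivWithin k (g 0) s x = g k x := by
  induction k with
  | zero => simp
  | succ k ih =>
    intro x hx
    have hk : iteratedDerivWithin k (g 0) s =ᶠ[nhds x] g k :=
      Filter.eventually_of_mem (hs.mem_nhds hx) ih
    rw [iteratedDerivWithin_succ, derivWithin_of_isOpen hs hx, hk.deriv_eq]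
    exact (hg k x hx).deriv

section NormedAlgebra

variable {𝕜 𝔸 : Type*} [NontriviallyNormedField 𝕜] [NormedRing 𝔸] [NormedAlgebra 𝕜 𝔸]
  {f : 𝕜 → 𝔸} {x : 𝕜}

theorem HasDerivAt.ringInverse [HasSummableGeomSeries 𝔸] {f' : 𝔸} (hf : HasDerivAt f f' x)
    (hx : IsUnit (f x)) :
    HasDerivAt (fun t => Ring.inverse (f t))
      (-(Ring.inverse (f x) * f' * Ring.inverse (f x))) x := by
  obtain ⟨u, hu⟩ := hx
  have hinv := hasFDerivAt_ringInverse (𝕜 := 𝕜) u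
  rw [hu] at hinv
  rw [← hu]
  exact (hinv.comp_hasDerivAt x hf).congr_deriv (by simp [mul_assoc])

theorem HasDerivAt.mul_mul_pow_of_hasDerivAt_neg (d : 𝔸) (hf : HasDerivAt f (-(f x * d * f x)) x)
    (k : ℕ) :
    HasDerivAt (fun t => f t * (d * f t) ^ k)
      (-((k : 𝕜) + 1) • (f x * (d * f x) ^ (k + 1))) x := by
  induction k with
  | zero => simpa [mul_assoc] using hf
  | succ k ih =>
    have hsplit : (fun t => f t * (d * f t) ^ (k + 1)) =
        fun t => f t * (d * f t) ^ k * (d * f t) :=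
      funext fun t => by rw [pow_succ, mul_assoc]
    rw [hsplit]
    refine (ih.mul (hf.const_mul d)).congr_deriv ?_
    simp only [pow_succ, mul_assoc, mul_neg, smul_mul_assoc]
    push_cast
    module

end NormedAlgebra

section MatrixCalculus

-- Matrices carry no global norm; any choice induces the product topology, which is all that
-- `HasDerivAt` sees.
attribute [local instance] Matrix.linftyOpNormedAddCommGroup Matrix.linftyOpNormedSpace
  Matrix.linftyOpNormedRing Matrix.linftyOpNormedAlgebra

variable {𝕜 : Type*} [RCLike 𝕜] {x : 𝕜}

theorem HasDerivAt.matrix_apply {m n : Type*} [Fintype m] [Fintype n] {A : 𝕜 → Matrix m n 𝕜}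
    {A' : Matrix m n 𝕜} (hA : HasDerivAt A A' x) (i : m) (j : n) :
    HasDerivAt (fun t => A t i j) (A' i j) x :=
  (entryLinearMap 𝕜 𝕜 i j).toContinuousLinearMap.hasFDerivAt.comp_hasDerivAt x hA

theorem HasDerivAt.matrix_mul_mul {l m n p : Type*} [Fintype l] [Fintype m] [Fintype n]
    [Fintype p] (P : Matrix l m 𝕜) (Q : Matrix n p 𝕜) {A : 𝕜 → Matrix m n 𝕜}
    {A' : Matrix m n 𝕜} (hA : HasDerivAt A A' x) :
    HasDerivAt (fun t => P * A t * Q) (P * A' * Q) x :=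
  (mulRightLinearMap l 𝕜 Q ∘ₗ mulLeftLinearMap n 𝕜 P).toContinuousLinearMap.hasFDerivAt
    |>.comp_hasDerivAt x hA

theorem HasDerivAt.matrix_inv {ι : Type*} [Fintype ι] [DecidableEq ι] {A : 𝕜 → Matrix ι ι 𝕜}
    {A' : Matrix ι ι 𝕜} (hA : HasDerivAt A A' x) (hx : IsUnit (A x).det) :
    HasDerivAt (fun t => (A t)⁻¹) (-((A x)⁻¹ * A' * (A x)⁻¹)) x := by
  have h := hA.ringInverse ((isUnit_iff_isUnit_det _).2 hx)
  simp only [nonsing_inv_eq_ringInverse]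
  exact h

variable {n m : ℕ} (X : Matrix (Fin n) (Fin m) ℝ)

theorem hasDerivAt_Mmat {S : ℝ → Matrix (Fin n) (Fin n) ℝ} {S' : Matrix (Fin n) (Fin n) ℝ}
    {θ : ℝ} (hS : HasDerivAt S S' θ) (hSθ : IsUnit (S θ).det)
    (hW : IsUnit (Xᵀ * (S θ)⁻¹ * X).det) :
    HasDerivAt (fun t => Mmat X (S t)) (-(Mmat X (S θ) * S' * Mmat X (S θ))) θ := by
  have hinv := hS.matrix_inv hSθ
  have hproj := ((hinv.matrix_mul_mul Xᵀ X).matrix_inv hW).matrix_mul_mul X Xᵀ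
  have hM : ∀ t, Mmat X (S t) = (S t)⁻¹ - (S t)⁻¹ * (X * (Xᵀ * (S t)⁻¹ * X)⁻¹ * Xᵀ) * (S t)⁻¹ :=
    fun t => by simp only [Mmat, Matrix.mul_assoc]
  simp only [hM]
  refine (hinv.sub ((hinv.mul hproj).mul hinv)).congr_deriv ?_
  set A := (S θ)⁻¹
  set B := (Xᵀ * A * X)⁻¹
  have hsandwich : X * (B * (Xᵀ * (A * S' * A) * X) * B) * Xᵀ
      = X * B * Xᵀ * (A * S' * A) * (X * B * Xᵀ) := by
    simp only [Matrix.mul_assoc]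
  simp only [Pi.mul_apply, Matrix.mul_neg, Matrix.neg_mul, hsandwich]
  noncomm_ring

theorem hasDerivAt_Mmat_affine_mul_pow_apply (S₀ D : Matrix (Fin n) (Fin n) ℝ) {θ : ℝ}
    (hSθ : IsUnit (S₀ + θ • D).det) (hW : IsUnit (Xᵀ * (S₀ + θ • D)⁻¹ * X).det) (k : ℕ)
    (i j : Fin n) :
    HasDerivAt (fun t => (Mmat X (S₀ + t • D) * (D * Mmat X (S₀ + t • D)) ^ k) i j)
      (-((k : ℝ) + 1) * (Mmat X (S₀ + θ • D) * (D * Mmat X (S₀ + θ • D)) ^ (k + 1)) i j) θ := by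
  have hS : HasDerivAt (fun t : ℝ => S₀ + t • D) D θ := by
    have h := ((hasDerivAt_id' θ).smul_const D).const_add S₀
    rw [one_smul] at h
    exact h
  exact ((hasDerivAt_Mmat X hS hSθ hW).mul_mul_pow_of_hasDerivAt_neg D k).matrix_apply i j

end MatrixCalculus

theorem iterated_deriv_M_general {n m : ℕ} (X : Matrix (Fin n) (Fin m) ℝ)
    (S₀ D : Matrix (Fin n) (Fin n) ℝ)
    (s : Set ℝ) (hs : IsOpen s)
    (hpos : ∀ θ ∈ s, (S₀ + θ • D).PosDef)
    (hinv : ∀ θ ∈ s, IsUnit (Xᵀ * (S₀ + θ • D)⁻¹ * X).det)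
    (k : ℕ) :
    ∀ θ ∈ s, ∀ i j,
      iteratedDerivWithin k (fun θ => Mmat X (S₀ + θ • D) i j) s θ
        = ((((-1 : ℝ) ^ k * (k.factorial : ℝ)) •
            (Mmat X (S₀ + θ • D) * (D * Mmat X (S₀ + θ • D)) ^ k)) : Matrix (Fin n) (Fin n) ℝ) i j := by
  intro θ hθ i j
  let g : ℕ → ℝ → ℝ := fun k t =>
    (((-1 : ℝ) ^ k * k.factorial) • (Mmat X (S₀ + t • D) * (D * Mmat X (S₀ + t • D)) ^ k)) i j
  have hg : ∀ k, ∀ t ∈ s, HasDerivAt (g k) (g (k + 1) t) t := by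
    intro k t ht
    have hSt := (isUnit_iff_isUnit_det _).1 (hpos t ht).isUnit
    refine ((hasDerivAt_Mmat_affine_mul_pow_apply X S₀ D hSt (hinv t ht) k i j).const_mul
      ((-1 : ℝ) ^ k * k.factorial)).congr_deriv ?_
    simp only [g, Matrix.smul_apply, smul_eq_mul, Nat.factorial_succ]
    push_cast
    ring
  have hg₀ : g 0 = fun t => Mmat X (S₀ + t • D) i j := by
    funext t
    simp [g]
  rw [← hg₀]
  exact iteratedDerivWithin_eq_of_hasDerivAt hs hg k θ hθ

theorem iterated_deriv_M {n m : ℕ} (X : Matrix (Fin n) (Fin m) ℝ) (hX : X.rank = m)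
    (S₀ D : Matrix (Fin n) (Fin n) ℝ) (hS₀ : S₀.IsSymm) (hD : D.IsSymm)
    (s : Set ℝ) (hs : IsOpen s)
    (hpos : ∀ θ ∈ s, (S₀ + θ • D).PosDef)
    (hinv : ∀ θ ∈ s, IsUnit (Xᵀ * (S₀ + θ • D)⁻¹ * X).det)
    (k : ℕ) :
    ∀ θ ∈ s, ∀ i j,
      iteratedDerivWithin k (fun θ => Mmat X (S₀ + θ • D) i j) s θ
        = ((((-1 : ℝ) ^ k * (k.factorial : ℝ)) •
            (Mmat X (S₀ + θ • D) * (D * Mmat X (S₀ + θ • D)) ^ k)) : Matrix (Fin n) (Fin n) ℝ) i j :=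
  iterated_deriv_M_general X S₀ D s hs hpos hinv k
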